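/- arXiv:1101.2640 — 4 statements merged into one kernel-verified Lean document; each statement's English description precedes it below -/
import Mathlib

section
/- If u : ℝ² → ℝ is a smooth solution of the hypergeometric-type equation (ax²+b₁x+c₁)u_xx + 2(axy+b₃x+c₃y+d₃)u_xy + (ay²+b₂y+c₂)u_yy + (ex+f₁)u_x + (ey+f₂)u_y + λ u = 0, then z = ∂u/∂x satisfies the equation of the same form with first-order coefficients τ_x(x) = (e+2a)x + f₁ + b₁, τ_y(y) = (e+2a)y + f₂ + 2b₃, and eigenvalue μ = λ + e. -/
/-- Partial derivative with respect to the first variable. -/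
noncomputable def px (f : ℝ → ℝ → ℝ) : ℝ → ℝ → ℝ := fun x y => deriv (fun t => f t y) x

/-- Partial derivative with respect to the second variable. -/
noncomputable def py (f : ℝ → ℝ → ℝ) : ℝ → ℝ → ℝ := fun x y => deriv (fun t => f x t) y

noncomputable def Dd (v : ℝ × ℝ) (F : ℝ × ℝ → ℝ) : ℝ × ℝ → ℝ := fun p => fderiv ℝ F p v

lemma Dd_contDiff {F : ℝ × ℝ → ℝ} (hF : ContDiff ℝ (⊤ : ℕ∞) F) (v : ℝ × ℝ) :
    ContDiff ℝ (⊤ : ℕ∞) (Dd v F) :=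
  (hF.fderiv_right (by simp)).clm_apply contDiff_const

lemma hasDerivAt_sliceX {F : ℝ × ℝ → ℝ} (hF : ContDiff ℝ (⊤ : ℕ∞) F) (x y : ℝ) :
    HasDerivAt (fun t => F (t, y)) (Dd (1, 0) F (x, y)) x := by
  have h1 : HasFDerivAt F (fderiv ℝ F (x, y)) (x, y) :=
    (hF.differentiable (by simp) (x, y)).hasFDerivAt
  have h2 : HasDerivAt (fun t : ℝ => ((t : ℝ), y)) (1, 0) x :=
    (hasDerivAt_id x).prodMk (hasDerivAt_const x y)
  exact h1.comp_hasDerivAt x h2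

lemma hasDerivAt_sliceY {F : ℝ × ℝ → ℝ} (hF : ContDiff ℝ (⊤ : ℕ∞) F) (x y : ℝ) :
    HasDerivAt (fun t => F (x, t)) (Dd (0, 1) F (x, y)) y := by
  have h1 : HasFDerivAt F (fderiv ℝ F (x, y)) (x, y) :=
    (hF.differentiable (by simp) (x, y)).hasFDerivAt
  have h2 : HasDerivAt (fun t : ℝ => (x, (t : ℝ))) (0, 1) y :=
    (hasDerivAt_const y x).prodMk (hasDerivAt_id y)
  exact h1.comp_hasDerivAt y h2

lemma px_eq {F : ℝ × ℝ → ℝ} (hF : ContDiff ℝ (⊤ : ℕ∞) F) (f : ℝ → ℝ → ℝ)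
    (hf : ∀ x y, f x y = F (x, y)) (x y : ℝ) :
    px f x y = Dd (1, 0) F (x, y) := by
  have h : (fun t => f t y) = fun t => F (t, y) := funext fun t => hf t y
  rw [px]; rw [h]
  exact (hasDerivAt_sliceX hF x y).deriv

lemma py_eq {F : ℝ × ℝ → ℝ} (hF : ContDiff ℝ (⊤ : ℕ∞) F) (f : ℝ → ℝ → ℝ)
    (hf : ∀ x y, f x y = F (x, y)) (x y : ℝ) :
    py f x y = Dd (0, 1) F (x, y) := by
  have h : (fun t => f x t) = fun t => F (x, t) := funext fun t => hf x t
  rw [py]; rw [h]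
  exact (hasDerivAt_sliceY hF x y).deriv

lemma Dd_comm {F : ℝ × ℝ → ℝ} (hF : ContDiff ℝ (⊤ : ℕ∞) F) (v w p : ℝ × ℝ) :
    Dd v (Dd w F) p = Dd w (Dd v F) p := by
  have hd : ∀ q, HasFDerivAt F (fderiv ℝ F q) q := fun q =>
    (hF.differentiable (by simp) q).hasFDerivAt
  have hdiff : Differentiable ℝ (fderiv ℝ F) :=
    (hF.fderiv_right (m := (⊤ : ℕ∞)) (by simp)).differentiable (by simp)
  have hd2 : HasFDerivAt (fderiv ℝ F) (fderiv ℝ (fderiv ℝ F) p) p := (hdiff p).hasFDerivAt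
  have hsymm := second_derivative_symmetric hd hd2
  have key : ∀ z : ℝ × ℝ, fderiv ℝ (fun q => fderiv ℝ F q z) p =
      (fderiv ℝ (fderiv ℝ F) p).flip z := by
    intro z
    rw [fderiv_clm_apply (hdiff p) (differentiableAt_const z)]
    simp
  have e1 : Dd w F = fun q => fderiv ℝ F q w := rfl
  have e2 : Dd v F = fun q => fderiv ℝ F q v := rfl
  show fderiv ℝ (Dd w F) p v = fderiv ℝ (Dd v F) p w
  rw [e1, e2]
  rw [key w, key v]
  simpa using hsymm v w

/-- If `u` is a smooth solution of the hypergeometric-type equation, then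
`z = ∂u/∂x` satisfies the equation of the same form with first-order coefficients
`τ_x(x) = (e+2a)x + f₁ + b₁`, `τ_y(y) = (e+2a)y + f₂ + 2b₃`, and eigenvalue `μ = λ + e`. -/
theorem first_derivative_satisfies_hypergeometric
    (a b₁ b₂ b₃ c₁ c₂ c₃ d₃ e f₁ f₂ lam : ℝ)
    (u : ℝ → ℝ → ℝ)
    (hu : ContDiff ℝ (⊤ : ℕ∞) (fun p : ℝ × ℝ => u p.1 p.2))
    (hpde : ∀ x y : ℝ,
      (a * x ^ 2 + b₁ * x + c₁) * px (px u) x y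
        + 2 * (a * x * y + b₃ * x + c₃ * y + d₃) * py (px u) x y
        + (a * y ^ 2 + b₂ * y + c₂) * py (py u) x y
        + (e * x + f₁) * px u x y + (e * y + f₂) * py u x y + lam * u x y = 0) :
    ∀ x y : ℝ,
      (a * x ^ 2 + b₁ * x + c₁) * px (px (px u)) x y
        + 2 * (a * x * y + b₃ * x + c₃ * y + d₃) * py (px (px u)) x y
        + (a * y ^ 2 + b₂ * y + c₂) * py (py (px u)) x y
        + ((e + 2 * a) * x + f₁ + b₁) * px (px u) x y
        + ((e + 2 * a) * y + f₂ + 2 * b₃) * py (px u) x y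
        + (lam + e) * px u x y = 0 := by
  intro x y
  set U : ℝ × ℝ → ℝ := fun p => u p.1 p.2 with hUdef
  have hU : ContDiff ℝ (⊤ : ℕ∞) U := hu
  set X : ℝ × ℝ → ℝ := Dd (1, 0) U with hXdef
  set Y : ℝ × ℝ → ℝ := Dd (0, 1) U with hYdef
  have hXc : ContDiff ℝ (⊤ : ℕ∞) X := Dd_contDiff hU _
  have hYc : ContDiff ℝ (⊤ : ℕ∞) Y := Dd_contDiff hU _
  set XX : ℝ × ℝ → ℝ := Dd (1, 0) X with hXXdef
  set M : ℝ × ℝ → ℝ := Dd (0, 1) X with hMdef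
  set YY : ℝ × ℝ → ℝ := Dd (0, 1) Y with hYYdef
  have hXXc : ContDiff ℝ (⊤ : ℕ∞) XX := Dd_contDiff hXc _
  have hMc : ContDiff ℝ (⊤ : ℕ∞) M := Dd_contDiff hXc _
  have hYYc : ContDiff ℝ (⊤ : ℕ∞) YY := Dd_contDiff hYc _
  -- pointwise descriptions of the partial derivatives
  have hu0 : ∀ s t : ℝ, u s t = U (s, t) := fun _ _ => rfl
  have hpx : ∀ s t : ℝ, px u s t = X (s, t) := px_eq hU u hu0
  have hpy : ∀ s t : ℝ, py u s t = Y (s, t) := py_eq hU u hu0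
  have hpxx : ∀ s t : ℝ, px (px u) s t = XX (s, t) := px_eq hXc (px u) hpx
  have hpyx : ∀ s t : ℝ, py (px u) s t = M (s, t) := py_eq hXc (px u) hpx
  have hpyY : ∀ s t : ℝ, py (py u) s t = YY (s, t) := py_eq hYc (py u) hpy
  have hpxxx : ∀ s t : ℝ, px (px (px u)) s t = Dd (1, 0) XX (s, t) :=
    px_eq hXXc (px (px u)) hpxx
  have hpyxx : ∀ s t : ℝ, py (px (px u)) s t = Dd (0, 1) XX (s, t) :=
    py_eq hXXc (px (px u)) hpxx
  have hpyyx : ∀ s t : ℝ, py (py (px u)) s t = Dd (0, 1) M (s, t) :=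
    py_eq hMc (py (px u)) hpyx
  -- the PDE in terms of the Dd derivatives
  have hpde' : ∀ s t : ℝ,
      (a * s ^ 2 + b₁ * s + c₁) * XX (s, t)
        + 2 * (a * s * t + b₃ * s + c₃ * t + d₃) * M (s, t)
        + (a * t ^ 2 + b₂ * t + c₂) * YY (s, t)
        + (e * s + f₁) * X (s, t) + (e * t + f₂) * Y (s, t) + lam * U (s, t) = 0 := by
    intro s t
    have := hpde s t
    rw [hpxx, hpyx, hpyY, hpx, hpy] at this
    exact this
  -- differentiate the PDE in the x-direction at (x, y)
  have hA : HasDerivAt (fun t : ℝ => a * t ^ 2 + b₁ * t + c₁) (2 * a * x + b₁) x := by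
    have h1 : HasDerivAt (fun t : ℝ => t ^ 2) (2 * x) x := by
      simpa using hasDerivAt_pow 2 x
    have := ((h1.const_mul a).add ((hasDerivAt_id x).const_mul b₁)).add_const c₁
    exact this.congr_deriv (by ring)
  have hQ : HasDerivAt (fun t : ℝ => a * t * y + b₃ * t + c₃ * y + d₃) (a * y + b₃) x := by
    have h1 : HasDerivAt (fun t : ℝ => a * t * y + b₃ * t) (a * y + b₃) x := by
      have := (((hasDerivAt_id x).const_mul a).mul_const y).add ((hasDerivAt_id x).const_mul b₃)
      exact this.congr_deriv (by ring)
    exact (h1.add_const (c₃ * y)).add_const d₃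
  have hL : HasDerivAt (fun t : ℝ => e * t + f₁) e x := by
    simpa using ((hasDerivAt_id x).const_mul e).add_const f₁
  have hXX' : HasDerivAt (fun t => XX (t, y)) (Dd (1, 0) XX (x, y)) x :=
    hasDerivAt_sliceX hXXc x y
  have hM' : HasDerivAt (fun t => M (t, y)) (Dd (1, 0) M (x, y)) x :=
    hasDerivAt_sliceX hMc x y
  have hYY' : HasDerivAt (fun t => YY (t, y)) (Dd (1, 0) YY (x, y)) x :=
    hasDerivAt_sliceX hYYc x y
  have hX' : HasDerivAt (fun t => X (t, y)) (XX (x, y)) x := hasDerivAt_sliceX hXc x y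
  have hY' : HasDerivAt (fun t => Y (t, y)) (M (x, y)) x := by
    have h := hasDerivAt_sliceX hYc x y
    have : Dd (1, 0) Y (x, y) = M (x, y) := Dd_comm hU (1, 0) (0, 1) (x, y)
    rwa [this] at h
  have hU' : HasDerivAt (fun t => U (t, y)) (X (x, y)) x := hasDerivAt_sliceX hU x y
  have hg : HasDerivAt (fun s : ℝ =>
      (a * s ^ 2 + b₁ * s + c₁) * XX (s, y)
        + 2 * (a * s * y + b₃ * s + c₃ * y + d₃) * M (s, y)
        + (a * y ^ 2 + b₂ * y + c₂) * YY (s, y)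
        + (e * s + f₁) * X (s, y) + (e * y + f₂) * Y (s, y) + lam * U (s, y))
      ((2 * a * x + b₁) * XX (x, y) + (a * x ^ 2 + b₁ * x + c₁) * Dd (1, 0) XX (x, y)
        + (2 * (a * y + b₃) * M (x, y)
            + 2 * (a * x * y + b₃ * x + c₃ * y + d₃) * Dd (1, 0) M (x, y))
        + (a * y ^ 2 + b₂ * y + c₂) * Dd (1, 0) YY (x, y)
        + (e * X (x, y) + (e * x + f₁) * XX (x, y))
        + (e * y + f₂) * M (x, y) + lam * X (x, y)) x := by
    have h2 : HasDerivAt (fun s : ℝ => 2 * (a * s * y + b₃ * s + c₃ * y + d₃))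
        (2 * (a * y + b₃)) x := hQ.const_mul 2
    have t1 := hA.mul hXX'
    have t2 := h2.mul hM'
    have t3 := hYY'.const_mul (a * y ^ 2 + b₂ * y + c₂)
    have t4 := hL.mul hX'
    have t5 := hY'.const_mul (e * y + f₂)
    have t6 := hU'.const_mul lam
    exact ((((t1.add t2).add t3).add t4).add t5).add t6
  have hg0 : HasDerivAt (fun s : ℝ =>
      (a * s ^ 2 + b₁ * s + c₁) * XX (s, y)
        + 2 * (a * s * y + b₃ * s + c₃ * y + d₃) * M (s, y)
        + (a * y ^ 2 + b₂ * y + c₂) * YY (s, y)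
        + (e * s + f₁) * X (s, y) + (e * y + f₂) * Y (s, y) + lam * U (s, y))
      0 x := by
    have hz : (fun s : ℝ =>
      (a * s ^ 2 + b₁ * s + c₁) * XX (s, y)
        + 2 * (a * s * y + b₃ * s + c₃ * y + d₃) * M (s, y)
        + (a * y ^ 2 + b₂ * y + c₂) * YY (s, y)
        + (e * s + f₁) * X (s, y) + (e * y + f₂) * Y (s, y) + lam * U (s, y))
        = fun _ => (0 : ℝ) := funext fun s => hpde' s y
    rw [hz]
    exact hasDerivAt_const x 0
  have hD : (2 * a * x + b₁) * XX (x, y) + (a * x ^ 2 + b₁ * x + c₁) * Dd (1, 0) XX (x, y)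
        + (2 * (a * y + b₃) * M (x, y)
            + 2 * (a * x * y + b₃ * x + c₃ * y + d₃) * Dd (1, 0) M (x, y))
        + (a * y ^ 2 + b₂ * y + c₂) * Dd (1, 0) YY (x, y)
        + (e * X (x, y) + (e * x + f₁) * XX (x, y))
        + (e * y + f₂) * M (x, y) + lam * X (x, y) = 0 := hg.unique hg0
  -- commute mixed partials
  have c1 : Dd (1, 0) M (x, y) = Dd (0, 1) XX (x, y) := Dd_comm hXc (1, 0) (0, 1) (x, y)
  have cY : Dd (1, 0) Y = M := funext fun q => Dd_comm hU (1, 0) (0, 1) q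
  have c2 : Dd (1, 0) YY (x, y) = Dd (0, 1) M (x, y) := by
    have h := Dd_comm hYc (1, 0) (0, 1) (x, y)
    rw [hYYdef]
    rw [h, cY]
  rw [c1, c2] at hD
  rw [hpxxx, hpyxx, hpyyx, hpxx, hpyx, hpx]
  linear_combination hD
end

section
/- If u is a smooth solution of the hypergeometric-type equation in two variables, then for all r, s ∈ ℕ the partial derivative z^{(r,s)} = ∂^{r+s}u/∂x^r∂y^s satisfies the equation with the same second-order coefficients, first-order coefficients τ_x^{(r,s)}(x) = (e+2a(r+s))x + f₁ + r b₁ + 2 s c₃ and τ_y^{(r,s)}(y) = (e+2a(r+s))y + f₂ + 2 r b₃ + s b₂, and eigenvalue μ_{r+s} = λ + (r+s)e + (r+s)(r+s-1)a. -/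
section aux

variable {u : ℝ → ℝ → ℝ}

private lemma line_x (y : ℝ) (x : ℝ) : HasDerivAt (fun t : ℝ => ((t, y) : ℝ × ℝ)) (1, 0) x :=
  (hasDerivAt_id x).prodMk (hasDerivAt_const x y)

private lemma line_y (x : ℝ) (y : ℝ) : HasDerivAt (fun t : ℝ => ((x, t) : ℝ × ℝ)) (0, 1) y :=
  (hasDerivAt_const y x).prodMk (hasDerivAt_id y)

private lemma hasDerivAt_px (hu : ContDiff ℝ (⊤ : ℕ∞) (fun p : ℝ × ℝ => u p.1 p.2)) (x y : ℝ) :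
    HasDerivAt (fun t => u t y) (fderiv ℝ (fun p : ℝ × ℝ => u p.1 p.2) (x, y) (1, 0)) x := by
  have h := (hu.differentiable (by simp) (x, y)).hasFDerivAt
  exact h.comp_hasDerivAt x (line_x y x)

private lemma hasDerivAt_py (hu : ContDiff ℝ (⊤ : ℕ∞) (fun p : ℝ × ℝ => u p.1 p.2)) (x y : ℝ) :
    HasDerivAt (fun t => u x t) (fderiv ℝ (fun p : ℝ × ℝ => u p.1 p.2) (x, y) (0, 1)) y := by
  have h := (hu.differentiable (by simp) (x, y)).hasFDerivAt
  exact h.comp_hasDerivAt y (line_y x y)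

private lemma px_eq_s2 (hu : ContDiff ℝ (⊤ : ℕ∞) (fun p : ℝ × ℝ => u p.1 p.2)) (x y : ℝ) :
    px u x y = fderiv ℝ (fun p : ℝ × ℝ => u p.1 p.2) (x, y) (1, 0) :=
  (hasDerivAt_px hu x y).deriv

private lemma py_eq_s2 (hu : ContDiff ℝ (⊤ : ℕ∞) (fun p : ℝ × ℝ => u p.1 p.2)) (x y : ℝ) :
    py u x y = fderiv ℝ (fun p : ℝ × ℝ => u p.1 p.2) (x, y) (0, 1) :=
  (hasDerivAt_py hu x y).deriv

private lemma smooth_px (hu : ContDiff ℝ (⊤ : ℕ∞) (fun p : ℝ × ℝ => u p.1 p.2)) :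
    ContDiff ℝ (⊤ : ℕ∞) (fun p : ℝ × ℝ => px u p.1 p.2) := by
  have : (fun p : ℝ × ℝ => px u p.1 p.2)
      = fun p : ℝ × ℝ => fderiv ℝ (fun q : ℝ × ℝ => u q.1 q.2) p (1, 0) := by
    funext p
    exact px_eq_s2 hu p.1 p.2
  rw [this]
  exact (hu.fderiv_right (by simp)).clm_apply contDiff_const

private lemma smooth_py (hu : ContDiff ℝ (⊤ : ℕ∞) (fun p : ℝ × ℝ => u p.1 p.2)) :
    ContDiff ℝ (⊤ : ℕ∞) (fun p : ℝ × ℝ => py u p.1 p.2) := by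
  have : (fun p : ℝ × ℝ => py u p.1 p.2)
      = fun p : ℝ × ℝ => fderiv ℝ (fun q : ℝ × ℝ => u q.1 q.2) p (0, 1) := by
    funext p
    exact py_eq_s2 hu p.1 p.2
  rw [this]
  exact (hu.fderiv_right (by simp)).clm_apply contDiff_const

private lemma clairaut (hu : ContDiff ℝ (⊤ : ℕ∞) (fun p : ℝ × ℝ => u p.1 p.2)) :
    px (py u) = py (px u) := by
  set F := fun p : ℝ × ℝ => u p.1 p.2 with hF
  have hΦ : ContDiff ℝ (⊤ : ℕ∞) (fderiv ℝ F) := hu.fderiv_right (by simp)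
  funext x y
  have hsymm : IsSymmSndFDerivAt ℝ F (x, y) :=
    hu.contDiffAt.isSymmSndFDerivAt (by rw [minSmoothness_of_isRCLikeNormedField]; exact WithTop.coe_le_coe.mpr (le_top : (2 : ℕ∞) ≤ ⊤))
  -- px (py u) x y = fderiv (fderiv F) (x,y) (1,0) (0,1)
  have h1 : px (py u) x y = fderiv ℝ (fderiv ℝ F) (x, y) (1, 0) (0, 1) := by
    have key : HasDerivAt (fun t => py u t y)
        (fderiv ℝ (fderiv ℝ F) (x, y) (1, 0) (0, 1)) x := by
      have hc : HasDerivAt (fun t => fderiv ℝ F (t, y))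
          (fderiv ℝ (fderiv ℝ F) (x, y) (1, 0)) x :=
        ((hΦ.differentiable (by simp) (x, y)).hasFDerivAt).comp_hasDerivAt x (line_x y x)
      have := hc.clm_apply (hasDerivAt_const x ((0:ℝ), (1:ℝ)))
      simp only [map_zero, add_zero] at this
      have heq : (fun t => py u t y) = fun t => fderiv ℝ F (t, y) (0, 1) := by
        funext t
        exact py_eq_s2 hu t y
      rw [heq]
      exact this
    exact key.deriv
  have h2 : py (px u) x y = fderiv ℝ (fderiv ℝ F) (x, y) (0, 1) (1, 0) := by
    have key : HasDerivAt (fun t => px u x t)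
        (fderiv ℝ (fderiv ℝ F) (x, y) (0, 1) (1, 0)) y := by
      have hc : HasDerivAt (fun t => fderiv ℝ F (x, t))
          (fderiv ℝ (fderiv ℝ F) (x, y) (0, 1)) y :=
        ((hΦ.differentiable (by simp) (x, y)).hasFDerivAt).comp_hasDerivAt y (line_y x y)
      have := hc.clm_apply (hasDerivAt_const y ((1:ℝ), (0:ℝ)))
      simp only [map_zero, add_zero] at this
      have heq : (fun t => px u x t) = fun t => fderiv ℝ F (x, t) (1, 0) := by
        funext t
        exact px_eq_s2 hu x t
      rw [heq]
      exact this
    exact key.deriv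
  rw [h1, h2, hsymm.eq]

end aux

section steps

variable {v : ℝ → ℝ → ℝ}

private lemma hasDerivAt_px' (hv : ContDiff ℝ (⊤ : ℕ∞) (fun p : ℝ × ℝ => v p.1 p.2)) (x y : ℝ) :
    HasDerivAt (fun t => v t y) (px v x y) x := by
  rw [px_eq_s2 hv x y]; exact hasDerivAt_px hv x y

private lemma hasDerivAt_py' (hv : ContDiff ℝ (⊤ : ℕ∞) (fun p : ℝ × ℝ => v p.1 p.2)) (x y : ℝ) :
    HasDerivAt (fun t => v x t) (py v x y) y := by
  rw [py_eq_s2 hv x y]; exact hasDerivAt_py hv x y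

private lemma step_x (a b₁ b₂ b₃ c₁ c₂ c₃ d₃ E F₁ F₂ L : ℝ)
    (hv : ContDiff ℝ (⊤ : ℕ∞) (fun p : ℝ × ℝ => v p.1 p.2))
    (h : ∀ x y : ℝ,
      (a * x ^ 2 + b₁ * x + c₁) * px (px v) x y
        + 2 * (a * x * y + b₃ * x + c₃ * y + d₃) * py (px v) x y
        + (a * y ^ 2 + b₂ * y + c₂) * py (py v) x y
        + (E * x + F₁) * px v x y + (E * y + F₂) * py v x y + L * v x y = 0) :
    ∀ x y : ℝ,
      (a * x ^ 2 + b₁ * x + c₁) * px (px (px v)) x y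
        + 2 * (a * x * y + b₃ * x + c₃ * y + d₃) * py (px (px v)) x y
        + (a * y ^ 2 + b₂ * y + c₂) * py (py (px v)) x y
        + ((E + 2 * a) * x + (F₁ + b₁)) * px (px v) x y
        + ((E + 2 * a) * y + (F₂ + 2 * b₃)) * py (px v) x y
        + (L + E) * px v x y = 0 := by
  intro x y
  have hvx := smooth_px hv
  have hvy := smooth_py hv
  have hvxx := smooth_px hvx
  have hvyx := smooth_py hvx
  have hvyy := smooth_py hvy
  have hid : HasDerivAt (fun t : ℝ => t) 1 x := hasDerivAt_id x
  have hsq : HasDerivAt (fun t : ℝ => t ^ 2) (2 * x) x := by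
    simpa using hasDerivAt_pow 2 x
  have T1 : HasDerivAt (fun t : ℝ => a * t ^ 2 + b₁ * t + c₁) (a * (2 * x) + b₁ * 1) x :=
    ((hsq.const_mul a).add (hid.const_mul b₁)).add_const c₁
  have T2 : HasDerivAt (fun t : ℝ => 2 * (a * t * y + b₃ * t + c₃ * y + d₃))
      (2 * (a * 1 * y + b₃ * 1)) x := by
    have := ((((hid.const_mul a).mul_const y).add (hid.const_mul b₃)).add_const
      (c₃ * y)).add_const d₃
    simpa using this.const_mul 2
  have T4 : HasDerivAt (fun t : ℝ => E * t + F₁) (E * 1) x :=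
    (hid.const_mul E).add_const F₁
  have P1 := hasDerivAt_px' hvxx x y
  have P2 := hasDerivAt_px' hvyx x y
  have P3 := hasDerivAt_px' hvyy x y
  have P4 := hasDerivAt_px' hvx x y
  have P5 := hasDerivAt_px' hvy x y
  have P6 := hasDerivAt_px' hv x y
  have Hbig := (((((T1.mul P1).add (T2.mul P2)).add (P3.const_mul
      (a * y ^ 2 + b₂ * y + c₂))).add (T4.mul P4)).add (P5.const_mul
      (E * y + F₂))).add (P6.const_mul L)
  have h0 : HasDerivAt (fun t : ℝ =>
      (a * t ^ 2 + b₁ * t + c₁) * px (px v) t y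
        + 2 * (a * t * y + b₃ * t + c₃ * y + d₃) * py (px v) t y
        + (a * y ^ 2 + b₂ * y + c₂) * py (py v) t y
        + (E * t + F₁) * px v t y + (E * y + F₂) * py v t y + L * v t y) 0 x := by
    have hf : (fun t : ℝ =>
      (a * t ^ 2 + b₁ * t + c₁) * px (px v) t y
        + 2 * (a * t * y + b₃ * t + c₃ * y + d₃) * py (px v) t y
        + (a * y ^ 2 + b₂ * y + c₂) * py (py v) t y
        + (E * t + F₁) * px v t y + (E * y + F₂) * py v t y + L * v t y)
        = fun _ => (0 : ℝ) := funext fun t => h t y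
    rw [hf]; exact hasDerivAt_const x 0
  have hEq := Hbig.unique h0
  rw [clairaut hvx, clairaut hvy, clairaut hv] at hEq
  linear_combination hEq

private lemma step_y (a b₁ b₂ b₃ c₁ c₂ c₃ d₃ E F₁ F₂ L : ℝ)
    (hv : ContDiff ℝ (⊤ : ℕ∞) (fun p : ℝ × ℝ => v p.1 p.2))
    (h : ∀ x y : ℝ,
      (a * x ^ 2 + b₁ * x + c₁) * px (px v) x y
        + 2 * (a * x * y + b₃ * x + c₃ * y + d₃) * py (px v) x y
        + (a * y ^ 2 + b₂ * y + c₂) * py (py v) x y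
        + (E * x + F₁) * px v x y + (E * y + F₂) * py v x y + L * v x y = 0) :
    ∀ x y : ℝ,
      (a * x ^ 2 + b₁ * x + c₁) * px (px (py v)) x y
        + 2 * (a * x * y + b₃ * x + c₃ * y + d₃) * py (px (py v)) x y
        + (a * y ^ 2 + b₂ * y + c₂) * py (py (py v)) x y
        + ((E + 2 * a) * x + (F₁ + 2 * c₃)) * px (py v) x y
        + ((E + 2 * a) * y + (F₂ + b₂)) * py (py v) x y
        + (L + E) * py v x y = 0 := by
  intro x y
  have hvx := smooth_px hv
  have hvy := smooth_py hv
  have hvxx := smooth_px hvx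
  have hvyx := smooth_py hvx
  have hvyy := smooth_py hvy
  have hid : HasDerivAt (fun t : ℝ => t) 1 y := hasDerivAt_id y
  have hsq : HasDerivAt (fun t : ℝ => t ^ 2) (2 * y) y := by
    simpa using hasDerivAt_pow 2 y
  have T2 : HasDerivAt (fun t : ℝ => 2 * (a * x * t + b₃ * x + c₃ * t + d₃))
      (2 * ((a * x) * 1 + c₃ * 1)) y := by
    have := ((((hid.const_mul (a * x)).add_const (b₃ * x)).add
      (hid.const_mul c₃)).add_const d₃).const_mul 2
    exact this
  have T3 : HasDerivAt (fun t : ℝ => a * t ^ 2 + b₂ * t + c₂) (a * (2 * y) + b₂ * 1) y :=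
    ((hsq.const_mul a).add (hid.const_mul b₂)).add_const c₂
  have T5 : HasDerivAt (fun t : ℝ => E * t + F₂) (E * 1) y :=
    (hid.const_mul E).add_const F₂
  have P1 := hasDerivAt_py' hvxx x y
  have P2 := hasDerivAt_py' hvyx x y
  have P3 := hasDerivAt_py' hvyy x y
  have P4 := hasDerivAt_py' hvx x y
  have P5 := hasDerivAt_py' hvy x y
  have P6 := hasDerivAt_py' hv x y
  have Hbig := (((((P1.const_mul (a * x ^ 2 + b₁ * x + c₁)).add (T2.mul P2)).add
      (T3.mul P3)).add (P4.const_mul (E * x + F₁))).add (T5.mul P5)).add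
      (P6.const_mul L)
  have h0 : HasDerivAt (fun t : ℝ =>
      (a * x ^ 2 + b₁ * x + c₁) * px (px v) x t
        + 2 * (a * x * t + b₃ * x + c₃ * t + d₃) * py (px v) x t
        + (a * t ^ 2 + b₂ * t + c₂) * py (py v) x t
        + (E * x + F₁) * px v x t + (E * t + F₂) * py v x t + L * v x t) 0 y := by
    have hf : (fun t : ℝ =>
      (a * x ^ 2 + b₁ * x + c₁) * px (px v) x t
        + 2 * (a * x * t + b₃ * x + c₃ * t + d₃) * py (px v) x t
        + (a * t ^ 2 + b₂ * t + c₂) * py (py v) x t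
        + (E * x + F₁) * px v x t + (E * t + F₂) * py v x t + L * v x t)
        = fun _ => (0 : ℝ) := funext fun t => h x t
    rw [hf]; exact hasDerivAt_const y 0
  have hEq := Hbig.unique h0
  rw [← clairaut hvx, ← clairaut hv] at hEq
  linear_combination hEq

end steps

/-- all partial derivatives `z^{(r,s)} = ∂^{r+s}u/∂x^r∂y^s` of a smooth solution
of the hypergeometric-type equation satisfy an equation of the same form with the same
second-order coefficients, first order coefficients
`τ_x^{(r,s)}(x) = (e+2a(r+s))x + f₁ + r b₁ + 2 s c₃`,
`τ_y^{(r,s)}(y) = (e+2a(r+s))y + f₂ + 2 r b₃ + s b₂`, and eigenvalue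
`μ_{r+s} = λ + (r+s)e + (r+s)(r+s-1)a`. -/
theorem partial_derivatives_satisfy_hypergeometric
    (a b₁ b₂ b₃ c₁ c₂ c₃ d₃ e f₁ f₂ lam : ℝ)
    (u : ℝ → ℝ → ℝ)
    (hu : ContDiff ℝ (⊤ : ℕ∞) (fun p : ℝ × ℝ => u p.1 p.2))
    (hpde : ∀ x y : ℝ,
      (a * x ^ 2 + b₁ * x + c₁) * px (px u) x y
        + 2 * (a * x * y + b₃ * x + c₃ * y + d₃) * py (px u) x y
        + (a * y ^ 2 + b₂ * y + c₂) * py (py u) x y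
        + (e * x + f₁) * px u x y + (e * y + f₂) * py u x y + lam * u x y = 0) :
    ∀ r s : ℕ, ∀ x y : ℝ,
      (a * x ^ 2 + b₁ * x + c₁) * px (px (px^[r] (py^[s] u))) x y
        + 2 * (a * x * y + b₃ * x + c₃ * y + d₃) * py (px (px^[r] (py^[s] u))) x y
        + (a * y ^ 2 + b₂ * y + c₂) * py (py (px^[r] (py^[s] u))) x y
        + ((e + 2 * a * ((r : ℝ) + s)) * x + f₁ + r * b₁ + 2 * s * c₃)
            * px (px^[r] (py^[s] u)) x y
        + ((e + 2 * a * ((r : ℝ) + s)) * y + f₂ + 2 * r * b₃ + s * b₂)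
            * py (px^[r] (py^[s] u)) x y
        + (lam + ((r : ℝ) + s) * e + ((r : ℝ) + s) * ((r : ℝ) + s - 1) * a)
            * (px^[r] (py^[s] u)) x y = 0 := by
  -- first: the y-derivatives
  have keyY : ∀ s : ℕ, ContDiff ℝ (⊤ : ℕ∞) (fun p : ℝ × ℝ => (py^[s] u) p.1 p.2) ∧
      ∀ x y : ℝ,
        (a * x ^ 2 + b₁ * x + c₁) * px (px (py^[s] u)) x y
          + 2 * (a * x * y + b₃ * x + c₃ * y + d₃) * py (px (py^[s] u)) x y
          + (a * y ^ 2 + b₂ * y + c₂) * py (py (py^[s] u)) x y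
          + ((e + 2 * a * (s : ℝ)) * x + (f₁ + 2 * (s : ℝ) * c₃)) * px (py^[s] u) x y
          + ((e + 2 * a * (s : ℝ)) * y + (f₂ + (s : ℝ) * b₂)) * py (py^[s] u) x y
          + (lam + (s : ℝ) * e + (s : ℝ) * ((s : ℝ) - 1) * a) * (py^[s] u) x y = 0 := by
    intro s
    induction s with
    | zero =>
      refine ⟨by simpa using hu, ?_⟩
      intro x y
      simp only [Function.iterate_zero, id_eq, Nat.cast_zero]
      linear_combination hpde x y
    | succ n ih =>
      obtain ⟨hsm, hsat⟩ := ih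
      have hstep := step_y a b₁ b₂ b₃ c₁ c₂ c₃ d₃ (e + 2 * a * (n : ℝ))
        (f₁ + 2 * (n : ℝ) * c₃) (f₂ + (n : ℝ) * b₂)
        (lam + (n : ℝ) * e + (n : ℝ) * ((n : ℝ) - 1) * a) hsm hsat
      constructor
      · rw [Function.iterate_succ_apply']
        exact smooth_py hsm
      · intro x y
        rw [Function.iterate_succ_apply']
        push_cast
        linear_combination hstep x y
  -- then: the x-derivatives
  have keyX : ∀ s r : ℕ, ContDiff ℝ (⊤ : ℕ∞) (fun p : ℝ × ℝ => (px^[r] (py^[s] u)) p.1 p.2) ∧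
      ∀ x y : ℝ,
        (a * x ^ 2 + b₁ * x + c₁) * px (px (px^[r] (py^[s] u))) x y
          + 2 * (a * x * y + b₃ * x + c₃ * y + d₃) * py (px (px^[r] (py^[s] u))) x y
          + (a * y ^ 2 + b₂ * y + c₂) * py (py (px^[r] (py^[s] u))) x y
          + ((e + 2 * a * ((r : ℝ) + s)) * x + (f₁ + 2 * (s : ℝ) * c₃ + r * b₁))
              * px (px^[r] (py^[s] u)) x y
          + ((e + 2 * a * ((r : ℝ) + s)) * y + (f₂ + (s : ℝ) * b₂ + 2 * r * b₃))
              * py (px^[r] (py^[s] u)) x y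
          + (lam + ((r : ℝ) + s) * e + ((r : ℝ) + s) * ((r : ℝ) + s - 1) * a)
              * (px^[r] (py^[s] u)) x y = 0 := by
    intro s r
    induction r with
    | zero =>
      obtain ⟨hsm, hsat⟩ := keyY s
      refine ⟨by simpa using hsm, ?_⟩
      intro x y
      simp only [Function.iterate_zero, id_eq, Nat.cast_zero]
      linear_combination hsat x y
    | succ n ih =>
      obtain ⟨hsm, hsat⟩ := ih
      have hstep := step_x a b₁ b₂ b₃ c₁ c₂ c₃ d₃ (e + 2 * a * ((n : ℝ) + s))
        (f₁ + 2 * (s : ℝ) * c₃ + n * b₁) (f₂ + (s : ℝ) * b₂ + 2 * n * b₃)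
        (lam + ((n : ℝ) + s) * e + ((n : ℝ) + s) * ((n : ℝ) + s - 1) * a) hsm hsat
      constructor
      · rw [Function.iterate_succ_apply']
        exact smooth_px hsm
      · intro x y
        rw [Function.iterate_succ_apply']
        push_cast
        linear_combination hstep x y
  intro r s x y
  linear_combination (keyX s r).2 x y
end

section
/- Let P̂_n (n ≥ 1) be the monic polynomial vector solution of the admissible hypergeometric-type equation (ax²+b₁x+c₁)u_xx + 2(axy+b₃x+c₃y+d₃)u_xy + (ay²+b₂y+c₂)u_yy + (ex+f₁)u_x + (ey+f₂)u_y + λ_n u = 0 with λ_n = −n((n−1)a+e). Then the subleading matrix coefficient Ĝ_{n,n-1} in P̂_n = x^n + Ĝ_{n,n-1}x^{n-1} + ... is bidiagonal with entries (1-indexed) g̃_{i,i} = (n+1−i)((n−i)b₁ + 2(i−1)c₃ + f₁)/ϖ_{2n−2} and g̃_{i+1,i} = i((i−1)b₂ + 2(n−i)b₃ + f₂)/ϖ_{2n−2}, where ϖ_k = ak + e. -/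
/-- The column vector of bivariate monomials of total degree `n` in graded
lexicographic order. -/
def monVec (n : ℕ) (x y : ℝ) : Fin (n + 1) → ℝ := fun k => x ^ (n - (k : ℕ)) * y ^ (k : ℕ)

namespace MSC

noncomputable def S (N : ℕ) (c : ℕ → ℕ → ℝ) : ℝ → ℝ → ℝ :=
  fun x y => ∑ p ∈ Finset.range N, ∑ q ∈ Finset.range N, c p q * x ^ p * y ^ q

def Dx (c : ℕ → ℕ → ℝ) : ℕ → ℕ → ℝ := fun p q => ((p : ℝ) + 1) * c (p + 1) q
def Dy (c : ℕ → ℕ → ℝ) : ℕ → ℕ → ℝ := fun p q => ((q : ℝ) + 1) * c p (q + 1)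
def MX (c : ℕ → ℕ → ℝ) : ℕ → ℕ → ℝ := fun p q => if p = 0 then 0 else c (p - 1) q
def MY (c : ℕ → ℕ → ℝ) : ℕ → ℕ → ℝ := fun p q => if q = 0 then 0 else c p (q - 1)

lemma S_px (N : ℕ) (c : ℕ → ℕ → ℝ) (h : ∀ q, c N q = 0) :
    px (S N c) = S N (Dx c) := by
  funext x y
  have hd : HasDerivAt (fun t => S N c t y)
      (∑ p ∈ Finset.range N, ∑ q ∈ Finset.range N, c p q * ((p : ℝ) * x ^ (p - 1)) * y ^ q) x := by
    apply HasDerivAt.fun_sum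
    intro p hp
    apply HasDerivAt.fun_sum
    intro q hq
    exact (((hasDerivAt_pow p x).const_mul (c p q)).mul_const (y ^ q))
  have : px (S N c) x y = _ := hd.deriv
  rw [px] at this ⊢
  rw [this]
  cases N with
  | zero => simp [S]
  | succ n =>
    rw [Finset.sum_range_succ' (fun p => ∑ q ∈ Finset.range (n+1), c p q * ((p:ℝ) * x ^ (p-1)) * y ^ q) n]
    unfold S
    rw [Finset.sum_range_succ (fun p => ∑ q ∈ Finset.range (n+1), Dx c p q * x ^ p * y ^ q) n]
    have h0 : ∑ q ∈ Finset.range (n+1), c 0 q * (((0:ℕ):ℝ) * x ^ (0-1)) * y ^ q = 0 := by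
      simp
    have htop : ∑ q ∈ Finset.range (n+1), Dx c n q * x ^ n * y ^ q = 0 := by
      apply Finset.sum_eq_zero
      intro q hq
      simp [Dx, h q]
    rw [htop, h0, add_zero, add_zero]
    apply Finset.sum_congr rfl
    intro p hp
    apply Finset.sum_congr rfl
    intro q hq
    simp only [Dx, Nat.add_sub_cancel]
    push_cast
    ring

lemma S_py (N : ℕ) (c : ℕ → ℕ → ℝ) (h : ∀ p, c p N = 0) :
    py (S N c) = S N (Dy c) := by
  funext x y
  have hd : HasDerivAt (fun t => S N c x t)
      (∑ p ∈ Finset.range N, ∑ q ∈ Finset.range N, c p q * x ^ p * ((q : ℝ) * y ^ (q - 1))) y := by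
    apply HasDerivAt.fun_sum
    intro p hp
    apply HasDerivAt.fun_sum
    intro q hq
    exact ((hasDerivAt_pow q y).const_mul (c p q * x ^ p))
  have : py (S N c) x y = _ := hd.deriv
  rw [py] at this ⊢
  rw [this]
  cases N with
  | zero => simp [S]
  | succ n =>
    unfold S
    apply Finset.sum_congr rfl
    intro p hp
    rw [Finset.sum_range_succ' (fun q => c p q * x ^ p * ((q:ℝ) * y ^ (q-1))) n]
    rw [Finset.sum_range_succ (fun q => Dy c p q * x ^ p * y ^ q) n]
    have h0 : c p 0 * x ^ p * (((0:ℕ):ℝ) * y ^ (0-1)) = 0 := by simp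
    have htop : Dy c p n * x ^ p * y ^ n = 0 := by simp [Dy, h p]
    rw [htop, h0, add_zero, add_zero]
    apply Finset.sum_congr rfl
    intro q hq
    simp only [Dy, Nat.add_sub_cancel]
    push_cast
    ring

lemma S_mulx (N : ℕ) (c : ℕ → ℕ → ℝ) (h : ∀ q, c (N - 1) q = 0) (x y : ℝ) :
    S N (MX c) x y = x * S N c x y := by
  cases N with
  | zero => simp [S]
  | succ n =>
    unfold S
    rw [Finset.sum_range_succ' (fun p => ∑ q ∈ Finset.range (n+1), MX c p q * x ^ p * y ^ q) n]
    rw [Finset.mul_sum, Finset.sum_range_succ (fun p => x * ∑ q ∈ Finset.range (n+1), c p q * x ^ p * y ^ q) n]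
    have h0 : ∑ q ∈ Finset.range (n+1), MX c 0 q * x ^ 0 * y ^ q = 0 := by
      apply Finset.sum_eq_zero; intro q hq; simp [MX]
    have htop : x * ∑ q ∈ Finset.range (n+1), c n q * x ^ n * y ^ q = 0 := by
      have : ∀ q ∈ Finset.range (n+1), c n q * x ^ n * y ^ q = 0 := by
        intro q hq; simp [show c n q = 0 from h q]
      rw [Finset.sum_eq_zero this]; ring
    rw [htop, h0, add_zero, add_zero]
    apply Finset.sum_congr rfl
    intro p hp
    rw [Finset.mul_sum]
    apply Finset.sum_congr rfl
    intro q hq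
    simp only [MX, Nat.succ_ne_zero, if_false, Nat.add_sub_cancel]
    ring

lemma S_muly (N : ℕ) (c : ℕ → ℕ → ℝ) (h : ∀ p, c p (N - 1) = 0) (x y : ℝ) :
    S N (MY c) x y = y * S N c x y := by
  cases N with
  | zero => simp [S]
  | succ n =>
    unfold S
    rw [Finset.mul_sum]
    apply Finset.sum_congr rfl
    intro p hp
    rw [Finset.sum_range_succ' (fun q => MY c p q * x ^ p * y ^ q) n]
    rw [Finset.mul_sum, Finset.sum_range_succ (fun q => y * (c p q * x ^ p * y ^ q)) n]
    have h0 : MY c p 0 * x ^ p * y ^ 0 = 0 := by simp [MY]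
    have htop : y * (c p n * x ^ p * y ^ n) = 0 := by simp [show c p n = 0 from h p]
    rw [htop, h0, add_zero, add_zero]
    apply Finset.sum_congr rfl
    intro q hq
    simp only [MY, Nat.succ_ne_zero, if_false, Nat.add_sub_cancel]
    ring

lemma S_add (N : ℕ) (c d : ℕ → ℕ → ℝ) (x y : ℝ) :
    S N (c + d) x y = S N c x y + S N d x y := by
  simp [S, add_mul, Finset.sum_add_distrib]

lemma S_smul (N : ℕ) (r : ℝ) (c : ℕ → ℕ → ℝ) (x y : ℝ) :
    S N (r • c) x y = r * S N c x y := by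
  simp [S, Finset.mul_sum]
  apply Finset.sum_congr rfl
  intro p _
  apply Finset.sum_congr rfl
  intro q _
  ring


lemma coeff_zero_of_sum (N : ℕ) (d : ℕ → ℝ)
    (h : ∀ t : ℝ, ∑ k ∈ Finset.range N, d k * t ^ k = 0) :
    ∀ k, k < N → d k = 0 := by
  have hp : (∑ k ∈ Finset.range N, Polynomial.C (d k) * Polynomial.X ^ k : Polynomial ℝ) = 0 := by
    apply Polynomial.funext
    intro t
    simp only [Polynomial.eval_finset_sum, Polynomial.eval_mul, Polynomial.eval_C,
      Polynomial.eval_pow, Polynomial.eval_X, Polynomial.eval_zero]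
    exact h t
  intro k hk
  have := congrArg (fun p => Polynomial.coeff p k) hp
  simp only [Polynomial.finset_sum_coeff, Polynomial.coeff_C_mul, Polynomial.coeff_X_pow,
    Polynomial.coeff_zero, mul_ite, mul_one, mul_zero] at this
  rwa [Finset.sum_ite_eq (Finset.range N) k d, if_pos (Finset.mem_range.mpr hk)] at this

lemma S_coeff_zero (N : ℕ) (c : ℕ → ℕ → ℝ) (h : ∀ x y : ℝ, S N c x y = 0) :
    ∀ p q, p < N → q < N → c p q = 0 := by
  intro p q hp hq
  have h1 : ∀ y x : ℝ, ∑ k ∈ Finset.range N, (∑ q' ∈ Finset.range N, c k q' * y ^ q') * x ^ k = 0 := by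
    intro y x
    rw [← h x y]
    unfold S
    apply Finset.sum_congr rfl
    intro k _
    rw [Finset.sum_mul]
    apply Finset.sum_congr rfl
    intro q' _
    ring
  have h2 : ∀ y : ℝ, ∑ q' ∈ Finset.range N, c p q' * y ^ q' = 0 := by
    intro y
    exact coeff_zero_of_sum N _ (h1 y) p hp
  exact coeff_zero_of_sum N (fun q' => c p q') h2 q hq

lemma Dx_supp {c : ℕ → ℕ → ℝ} {M : ℕ} (h : ∀ p q, M + 1 ≤ p + q → c p q = 0) :
    ∀ p q, M ≤ p + q → Dx c p q = 0 := by
  intro p q hpq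
  simp [Dx, h (p+1) q (by omega)]

lemma Dy_supp {c : ℕ → ℕ → ℝ} {M : ℕ} (h : ∀ p q, M + 1 ≤ p + q → c p q = 0) :
    ∀ p q, M ≤ p + q → Dy c p q = 0 := by
  intro p q hpq
  simp [Dy, h p (q+1) (by omega)]

lemma MX_supp {c : ℕ → ℕ → ℝ} {M : ℕ} (h : ∀ p q, M ≤ p + q → c p q = 0) :
    ∀ p q, M + 1 ≤ p + q → MX c p q = 0 := by
  intro p q hpq
  unfold MX
  rcases Nat.eq_zero_or_pos p with h0 | h0
  · simp [h0]
  · rw [if_neg (by omega)]; exact h (p-1) q (by omega)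

lemma MY_supp {c : ℕ → ℕ → ℝ} {M : ℕ} (h : ∀ p q, M ≤ p + q → c p q = 0) :
    ∀ p q, M + 1 ≤ p + q → MY c p q = 0 := by
  intro p q hpq
  unfold MY
  rcases Nat.eq_zero_or_pos q with h0 | h0
  · simp [h0]
  · rw [if_neg (by omega)]; exact h p (q-1) (by omega)


noncomputable def Eop (a b₁ b₂ b₃ c₁ c₂ c₃ d₃ e f₁ f₂ lam : ℝ) (c : ℕ → ℕ → ℝ) : ℕ → ℕ → ℝ :=
  a • MX (MX (Dx (Dx c))) + b₁ • MX (Dx (Dx c)) + c₁ • Dx (Dx c)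
    + (2*a) • MX (MY (Dy (Dx c))) + (2*b₃) • MX (Dy (Dx c)) + (2*c₃) • MY (Dy (Dx c))
    + (2*d₃) • Dy (Dx c)
    + a • MY (MY (Dy (Dy c))) + b₂ • MY (Dy (Dy c)) + c₂ • Dy (Dy c)
    + e • MX (Dx c) + f₁ • Dx c + e • MY (Dy c) + f₂ • Dy c + lam • c

lemma Eop_apply (a b₁ b₂ b₃ c₁ c₂ c₃ d₃ e f₁ f₂ lam : ℝ) (c : ℕ → ℕ → ℝ) (p q : ℕ) :
    Eop a b₁ b₂ b₃ c₁ c₂ c₃ d₃ e f₁ f₂ lam c p q =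
      a * (((p:ℝ) - 1) * p + 2 * p * q + ((q:ℝ) - 1) * q) * c p q
        + (e * ((p:ℝ) + (q:ℝ)) + lam) * c p q
        + (b₁ * p + 2 * c₃ * q + f₁) * ((p:ℝ) + 1) * c (p + 1) q
        + (2 * b₃ * p + b₂ * q + f₂) * ((q:ℝ) + 1) * c p (q + 1)
        + c₁ * ((p:ℝ) + 1) * ((p:ℝ) + 2) * c (p + 2) q
        + 2 * d₃ * ((p:ℝ) + 1) * ((q:ℝ) + 1) * c (p + 1) (q + 1)
        + c₂ * ((q:ℝ) + 1) * ((q:ℝ) + 2) * c p (q + 2) := by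
  rcases p with _ | _ | p <;> rcases q with _ | _ | q <;>
    simp only [Eop, Pi.add_apply, Pi.smul_apply, smul_eq_mul, MX, MY, Dx, Dy,
      Nat.succ_ne_zero, if_false, if_true, Nat.add_sub_cancel, Nat.cast_zero, Nat.cast_one,
      Nat.cast_add, Nat.cast_succ, reduceIte] <;>
    push_cast <;> ring


lemma S_Eop (N : ℕ) (a b₁ b₂ b₃ c₁ c₂ c₃ d₃ e f₁ f₂ lam : ℝ) (c : ℕ → ℕ → ℝ)
    (hs : ∀ p q, N ≤ p + q + 2 → c p q = 0) (x y : ℝ) :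
    S N (Eop a b₁ b₂ b₃ c₁ c₂ c₃ d₃ e f₁ f₂ lam c) x y =
      (a * x ^ 2 + b₁ * x + c₁) * S N (Dx (Dx c)) x y
        + 2 * (a * x * y + b₃ * x + c₃ * y + d₃) * S N (Dy (Dx c)) x y
        + (a * y ^ 2 + b₂ * y + c₂) * S N (Dy (Dy c)) x y
        + (e * x + f₁) * S N (Dx c) x y
        + (e * y + f₂) * S N (Dy c) x y
        + lam * S N c x y := by
  have bxx : ∀ q, Dx (Dx c) (N - 1) q = 0 := by
    intro q; simp only [Dx]; rw [hs (N - 1 + 1 + 1) q (by omega)]; ring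
  have bMXxx : ∀ q, MX (Dx (Dx c)) (N - 1) q = 0 := by
    intro q; unfold MX; split
    · rfl
    · next h0 => simp only [Dx]; rw [hs (N - 1 - 1 + 1 + 1) q (by omega)]; ring
  have byx_p : ∀ q, Dy (Dx c) (N - 1) q = 0 := by
    intro q; simp only [Dy, Dx]; rw [hs (N - 1 + 1) (q + 1) (by omega)]; ring
  have byx_q : ∀ p, Dy (Dx c) p (N - 1) = 0 := by
    intro p; simp only [Dy, Dx]; rw [hs (p + 1) (N - 1 + 1) (by omega)]; ring
  have bMYyx : ∀ q, MY (Dy (Dx c)) (N - 1) q = 0 := by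
    intro q; unfold MY; split
    · rfl
    · next h0 => simp only [Dy, Dx]; rw [hs (N - 1 + 1) (q - 1 + 1) (by omega)]; ring
  have byy : ∀ p, Dy (Dy c) p (N - 1) = 0 := by
    intro p; simp only [Dy]; rw [hs p (N - 1 + 1 + 1) (by omega)]; ring
  have bMYyy : ∀ p, MY (Dy (Dy c)) p (N - 1) = 0 := by
    intro p; unfold MY; split
    · rfl
    · next h0 => simp only [Dy]; rw [hs p (N - 1 - 1 + 1 + 1) (by omega)]; ring
  have bx : ∀ q, Dx c (N - 1) q = 0 := by
    intro q; simp only [Dx]; rw [hs (N - 1 + 1) q (by omega)]; ring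
  have by' : ∀ p, Dy c p (N - 1) = 0 := by
    intro p; simp only [Dy]; rw [hs p (N - 1 + 1) (by omega)]; ring
  unfold Eop
  simp only [S_add, S_smul]
  rw [S_mulx N (MX (Dx (Dx c))) bMXxx x y, S_mulx N (Dx (Dx c)) bxx x y,
    S_mulx N (MY (Dy (Dx c))) bMYyx x y, S_muly N (Dy (Dx c)) byx_q x y,
    S_mulx N (Dy (Dx c)) byx_p x y,
    S_muly N (MY (Dy (Dy c))) bMYyy x y, S_muly N (Dy (Dy c)) byy x y,
    S_mulx N (Dx c) bx x y, S_muly N (Dy c) by' x y]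
  ring


lemma G_congr {m : ℕ} (G : (k : ℕ) → Matrix (Fin (m + 2)) (Fin (k + 1)) ℝ)
    {k k' : ℕ} (h : k = k') (i : Fin (m + 2)) (q : ℕ) (hq : q < k + 1) (hq' : q < k' + 1) :
    G k i ⟨q, hq⟩ = G k' i ⟨q, hq'⟩ := by subst h; rfl

end MSC

open MSC Finset in
/-- stated with `n = m+1 ≥ 1`: the subleading matrix coefficient
`Ĝ_{n,n-1}` of the monic polynomial vector solution of the admissible hypergeometric-type
equation is bidiagonal with the stated entries, where `ϖ_{2n-2} = (2n-2)a + e`. -/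
theorem monic_subleading_coefficient (m : ℕ)
    (a b₁ b₂ b₃ c₁ c₂ c₃ d₃ e f₁ f₂ : ℝ)
    (hadm : ∀ k : ℕ, a * (k : ℝ) + e ≠ 0)
    (G : (k : ℕ) → Matrix (Fin (m + 2)) (Fin (k + 1)) ℝ)
    (P : ℝ → ℝ → Fin (m + 2) → ℝ)
    (hP : ∀ x y : ℝ,
      P x y = monVec (m + 1) x y + ∑ k ∈ Finset.range (m + 1), (G k).mulVec (monVec k x y))
    (hpde : ∀ i : Fin (m + 2), ∀ x y : ℝ,
      (a * x ^ 2 + b₁ * x + c₁) * px (px (fun s t => P s t i)) x y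
        + 2 * (a * x * y + b₃ * x + c₃ * y + d₃) * py (px (fun s t => P s t i)) x y
        + (a * y ^ 2 + b₂ * y + c₂) * py (py (fun s t => P s t i)) x y
        + (e * x + f₁) * px (fun s t => P s t i) x y
        + (e * y + f₂) * py (fun s t => P s t i) x y
        + (-(((m : ℝ) + 1)) * (((m : ℝ) + 1 - 1) * a + e)) * P x y i = 0) :
    ∀ (i : Fin (m + 2)) (j : Fin (m + 1)),
      G m i j =
        if (i : ℕ) = (j : ℕ) then
          (((m : ℝ) + 1) - (i : ℕ)) *
            ((((m : ℝ) + 1) - 1 - (i : ℕ)) * b₁ + 2 * (i : ℕ) * c₃ + f₁) /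
            (a * (2 * ((m : ℝ) + 1) - 2) + e)
        else if (i : ℕ) = (j : ℕ) + 1 then
          ((j : ℝ) + 1) *
            ((j : ℝ) * b₂ + 2 * (((m : ℝ) + 1) - 1 - (j : ℕ)) * b₃ + f₂) /
            (a * (2 * ((m : ℝ) + 1) - 2) + e)
        else 0 := by
  intro i j
  obtain ⟨c, hc_le, hc_eq, hc_gt⟩ :
      ∃ c : ℕ → ℕ → ℝ,
        (∀ p q, p + q ≤ m →
            c p q = G (p + q) i ⟨q, Nat.lt_succ_of_le (Nat.le_add_left q p)⟩) ∧
        (∀ p q, p + q = m + 1 → c p q = if q = (i : ℕ) then 1 else 0) ∧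
        (∀ p q, m + 2 ≤ p + q → c p q = 0) := by
    refine ⟨fun p q => if h : p + q ≤ m
        then G (p + q) i ⟨q, Nat.lt_succ_of_le (Nat.le_add_left q p)⟩
        else if p + q = m + 1 ∧ q = (i : ℕ) then 1 else 0, ?_, ?_, ?_⟩
    · intro p q h
      show (if h' : p + q ≤ m
        then G (p + q) i ⟨q, Nat.lt_succ_of_le (Nat.le_add_left q p)⟩
        else if p + q = m + 1 ∧ q = (i : ℕ) then 1 else 0) = _
      rw [dif_pos h]
    · intro p q h
      show (if h' : p + q ≤ m
        then G (p + q) i ⟨q, Nat.lt_succ_of_le (Nat.le_add_left q p)⟩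
        else if p + q = m + 1 ∧ q = (i : ℕ) then 1 else 0) = _
      rw [dif_neg (by omega)]
      by_cases hq : q = (i : ℕ)
      · simp only [hq, and_true, if_pos (by omega : p + (i:ℕ) = m + 1)]
        simp
      · simp [hq]
    · intro p q h
      show (if h' : p + q ≤ m
        then G (p + q) i ⟨q, Nat.lt_succ_of_le (Nat.le_add_left q p)⟩
        else if p + q = m + 1 ∧ q = (i : ℕ) then 1 else 0) = _
      rw [dif_neg (by omega), if_neg (by omega)]
  -- Step 1: P row i equals the coefficient sum
  have F0 : ∀ x y : ℝ, P x y i = S (m + 4) c x y := by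
    intro x y
    have h1 := congrFun (hP x y) i
    rw [h1]
    simp only [Pi.add_apply, Finset.sum_apply]
    have hsplit : S (m + 4) c x y
        = ∑ k ∈ range (m + 2), ∑ t ∈ range (k + 1), c (k - t) t * x ^ (k - t) * y ^ t := by
      unfold S
      rw [← Finset.sum_product']
      rw [← Finset.sum_filter_add_sum_filter_not (range (m + 4) ×ˢ range (m + 4))
        (fun pq => pq.1 + pq.2 ≤ m + 1) (fun pq => c pq.1 pq.2 * x ^ pq.1 * y ^ pq.2)]
      have hz : ∑ pq ∈ (range (m + 4) ×ˢ range (m + 4)).filter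
          (fun pq => ¬ pq.1 + pq.2 ≤ m + 1), c pq.1 pq.2 * x ^ pq.1 * y ^ pq.2 = 0 := by
        apply Finset.sum_eq_zero
        intro pq hpq
        rw [Finset.mem_filter] at hpq
        rw [hc_gt pq.1 pq.2 (by omega)]
        ring
      rw [hz, add_zero,
        Finset.sum_sigma' (range (m + 2)) (fun k => range (k + 1))
          (fun k t => c (k - t) t * x ^ (k - t) * y ^ t)]
      apply Finset.sum_nbij' (i := fun pq => (⟨pq.1 + pq.2, pq.2⟩ : Σ _ : ℕ, ℕ))
        (j := fun kt => ((kt.1 - kt.2, kt.2) : ℕ × ℕ))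
      · intro pq hpq
        simp only [Finset.mem_filter, Finset.mem_product, Finset.mem_range] at hpq
        simp only [Finset.mem_sigma, Finset.mem_range]
        omega
      · intro kt hkt
        simp only [Finset.mem_sigma, Finset.mem_range] at hkt
        simp only [Finset.mem_filter, Finset.mem_product, Finset.mem_range]
        omega
      · intro pq hpq
        simp only [Nat.add_sub_cancel]
      · intro kt hkt
        simp only [Finset.mem_sigma, Finset.mem_range] at hkt
        obtain ⟨k, t⟩ := kt
        simp only at hkt ⊢
        have : k - t + t = k := by omega
        simp [this]
      · intro pq hpq
        simp only [Nat.add_sub_cancel]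
    rw [hsplit, Finset.sum_range_succ
      (fun k => ∑ t ∈ range (k + 1), c (k - t) t * x ^ (k - t) * y ^ t) (m + 1)]
    have htop : ∑ t ∈ range (m + 1 + 1), c (m + 1 - t) t * x ^ (m + 1 - t) * y ^ t
        = monVec (m + 1) x y i := by
      have hterm : ∀ t ∈ range (m + 1 + 1),
          c (m + 1 - t) t * x ^ (m + 1 - t) * y ^ t
            = if t = (i : ℕ) then x ^ (m + 1 - t) * y ^ t else 0 := by
        intro t ht
        rw [Finset.mem_range] at ht
        rw [hc_eq (m + 1 - t) t (by omega)]
        split <;> simp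
      rw [Finset.sum_congr rfl hterm, Finset.sum_ite_eq' (range (m + 1 + 1)) (i : ℕ)
        (fun t => x ^ (m + 1 - t) * y ^ t), if_pos (Finset.mem_range.mpr i.isLt)]
      rfl
    have hrest : ∀ k ∈ range (m + 1),
        ∑ t ∈ range (k + 1), c (k - t) t * x ^ (k - t) * y ^ t
          = (G k).mulVec (monVec k x y) i := by
      intro k hk
      rw [Finset.mem_range] at hk
      rw [← Fin.sum_univ_eq_sum_range (fun t => c (k - t) t * x ^ (k - t) * y ^ t) (k + 1)]
      simp only [Matrix.mulVec, dotProduct, monVec]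
      apply Finset.sum_congr rfl
      intro t _
      have hle : (k - (t : ℕ)) + (t : ℕ) ≤ m := by omega
      rw [hc_le (k - (t : ℕ)) (t : ℕ) hle]
      rw [G_congr G (show (k - (t : ℕ)) + (t : ℕ) = k by omega) i (t : ℕ) _ t.isLt]
      rw [Fin.eta]
      ring
    rw [Finset.sum_congr rfl hrest, htop]
    ring
  -- Step 2: derivatives
  have hfun : (fun s t => P s t i) = S (m + 4) c := funext fun s => funext fun t => F0 s t
  have bN : ∀ q, c (m + 4) q = 0 := fun q => hc_gt _ _ (by omega)
  have bN' : ∀ p, c p (m + 4) = 0 := fun p => hc_gt _ _ (by omega)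
  have bNx : ∀ q, Dx c (m + 4) q = 0 := by
    intro q; simp only [Dx]; rw [hc_gt (m + 4 + 1) q (by omega)]; ring
  have bNx' : ∀ p, Dx c p (m + 4) = 0 := by
    intro p; simp only [Dx]; rw [hc_gt (p + 1) (m + 4) (by omega)]; ring
  have bNy' : ∀ p, Dy c p (m + 4) = 0 := by
    intro p; simp only [Dy]; rw [hc_gt p (m + 4 + 1) (by omega)]; ring
  have h1 : px (fun s t => P s t i) = S (m + 4) (Dx c) := by
    rw [hfun, S_px (m + 4) c bN]
  have h2 : py (fun s t => P s t i) = S (m + 4) (Dy c) := by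
    rw [hfun, S_py (m + 4) c bN']
  have h3 : px (px (fun s t => P s t i)) = S (m + 4) (Dx (Dx c)) := by
    rw [h1, S_px (m + 4) (Dx c) bNx]
  have h4 : py (px (fun s t => P s t i)) = S (m + 4) (Dy (Dx c)) := by
    rw [h1, S_py (m + 4) (Dx c) bNx']
  have h5 : py (py (fun s t => P s t i)) = S (m + 4) (Dy (Dy c)) := by
    rw [h2, S_py (m + 4) (Dy c) bNy']
  have hs : ∀ p q, m + 4 ≤ p + q + 2 → c p q = 0 := fun p q h => hc_gt p q (by omega)
  have hbig : ∀ x y : ℝ, S (m + 4) (Eop a b₁ b₂ b₃ c₁ c₂ c₃ d₃ e f₁ f₂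
      (-(((m : ℝ) + 1)) * (((m : ℝ) + 1 - 1) * a + e)) c) x y = 0 := by
    intro x y
    rw [S_Eop (m + 4) a b₁ b₂ b₃ c₁ c₂ c₃ d₃ e f₁ f₂ _ c hs x y, ← h3, ← h4, ← h5, ← h1, ← h2]
    have hh := hpde i x y
    rw [F0 x y] at hh
    linear_combination hh
  have hcoeff := S_coeff_zero (m + 4) _ hbig (m - (j : ℕ)) (j : ℕ) (by omega)
    (by have := j.isLt; omega)
  rw [Eop_apply] at hcoeff
  have hj : (j : ℕ) ≤ m := by have := j.isLt; omega
  have hv1 : c (m - (j : ℕ)) (j : ℕ) = G m i j := by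
    rw [hc_le _ _ (by omega)]
    rw [G_congr G (show (m - (j : ℕ)) + (j : ℕ) = m by omega) i (j : ℕ) _ j.isLt]
  have hv2 : c (m - (j : ℕ) + 1) (j : ℕ) = if (j : ℕ) = (i : ℕ) then 1 else 0 :=
    hc_eq _ _ (by omega)
  have hv3 : c (m - (j : ℕ)) ((j : ℕ) + 1) = if (j : ℕ) + 1 = (i : ℕ) then 1 else 0 :=
    hc_eq _ _ (by omega)
  have hv4 : c (m - (j : ℕ) + 2) (j : ℕ) = 0 := hc_gt _ _ (by omega)
  have hv5 : c (m - (j : ℕ) + 1) ((j : ℕ) + 1) = 0 := hc_gt _ _ (by omega)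
  have hv6 : c (m - (j : ℕ)) ((j : ℕ) + 2) = 0 := hc_gt _ _ (by omega)
  rw [hv1, hv2, hv3, hv4, hv5, hv6, Nat.cast_sub hj] at hcoeff
  have hne : a * (2 * ((m : ℝ) + 1) - 2) + e ≠ 0 := by
    have h := hadm (2 * m)
    have heq : a * ((2 * m : ℕ) : ℝ) + e = a * (2 * ((m : ℝ) + 1) - 2) + e := by
      push_cast; ring
    rwa [heq] at h
  by_cases hd : (i : ℕ) = (j : ℕ)
  · rw [if_pos hd]
    rw [if_pos hd.symm, if_neg (by omega : ¬ ((j : ℕ) + 1 = (i : ℕ)))] at hcoeff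
    have hdr : ((i : ℕ) : ℝ) = ((j : ℕ) : ℝ) := by exact_mod_cast hd
    rw [hdr, eq_div_iff hne]
    linear_combination -hcoeff
  · by_cases hsd : (i : ℕ) = (j : ℕ) + 1
    · rw [if_neg hd, if_pos hsd]
      rw [if_neg (fun h => hd h.symm), if_pos hsd.symm] at hcoeff
      rw [eq_div_iff hne]
      linear_combination -hcoeff
    · rw [if_neg hd, if_neg hsd]
      rw [if_neg (fun h => hd h.symm), if_neg (fun h => hsd h.symm)] at hcoeff
      have hz : (a * (2 * ((m : ℝ) + 1) - 2) + e) * G m i j = 0 := by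
        linear_combination -hcoeff
      rcases mul_eq_zero.mp hz with h | h
      · exact absurd h hne
      · exact h
end

section
/- The non-monic Appell polynomials F^{(α,β)}_{n,m} relate to monic Appell polynomials by F_{n-ℓ,ℓ}^{(α,β)} = Σ_{j=0}^{n} g_{ℓ,j} Â_{n-j,j}^{(α,β)} where the connection matrix G = (g_{i,j}) of size (n+1)×(n+1), g_{i,j} = (−1)^n C(n,j) (α+n−i)_{n−j}(β+i)_j / ((α)_{n−j}(β)_j), is invertible when α, β > 0. -/
/-- The Pochhammer symbol `(a)_k = a(a+1)⋯(a+k−1)` for a real number `a`. -/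
noncomputable def poch (a : ℝ) (k : ℕ) : ℝ := (ascPochhammer ℝ k).eval a

open Polynomial Finset Matrix

lemma poch_eq_prod (a : ℝ) (k : ℕ) : poch a k = ∏ m ∈ Finset.range k, (a + m) := by
  induction k with
  | zero => simp [poch]
  | succ k ih =>
      rw [poch, ascPochhammer_succ_eval, ← poch, ih, Finset.prod_range_succ]

lemma poch_pos {a : ℝ} (ha : 0 < a) (k : ℕ) : 0 < poch a k :=
  ascPochhammer_pos k a ha

noncomputable def connP (α β : ℝ) (n j : ℕ) : ℝ[X] :=
  (∏ k ∈ Finset.range j, (X + C (β + k))) *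
    (∏ k ∈ Finset.range (n - j), (C (α + n + k) - X))

lemma connP_natDegree_le (α β : ℝ) (n j : ℕ) (hj : j ≤ n) :
    (connP α β n j).natDegree ≤ n := by
  refine le_trans (natDegree_mul_le) ?_
  have h1 : (∏ k ∈ Finset.range j, (X + C (β + (k:ℝ)))).natDegree ≤ j := by
    refine le_trans (natDegree_prod_le _ _) ?_
    have h : ∑ k ∈ Finset.range j, (X + C (β + (k:ℝ))).natDegree = j := by
      calc ∑ k ∈ Finset.range j, (X + C (β + (k:ℝ))).natDegree
        = ∑ _k ∈ Finset.range j, 1 :=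
          Finset.sum_congr rfl fun k _ => natDegree_X_add_C _
      _ = j := by simp
    exact h.le
  have h2 : (∏ k ∈ Finset.range (n - j), (C (α + n + (k:ℝ)) - X)).natDegree ≤ n - j := by
    refine le_trans (natDegree_prod_le _ _) ?_
    calc ∑ k ∈ Finset.range (n-j), (C (α + n + (k:ℝ)) - X).natDegree
        ≤ ∑ _k ∈ Finset.range (n-j), 1 := by
          refine Finset.sum_le_sum fun k _ => ?_
          refine le_trans (natDegree_sub_le _ _) ?_
          rw [natDegree_C, natDegree_X]
          norm_num
      _ = n - j := by simp
  omega
lemma connP_eval (α β : ℝ) (n j : ℕ) (x : ℝ) :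
    (connP α β n j).eval x =
      (∏ k ∈ Finset.range j, (x + (β + k))) *
        (∏ k ∈ Finset.range (n - j), (α + n + k - x)) := by
  simp [connP, eval_prod]

/-- the connection matrix `G = (g_{i,j})` between the non-monic Appell
polynomials and the monic Appell polynomials, with entries
`g_{i,j} = (−1)^n C(n,j) (α+n−i)_{n−j}(β+i)_j / ((α)_{n−j}(β)_j)`, is invertible
(its determinant is nonzero) for `α, β > 0`. -/
theorem appell_connection_matrix_invertible (α β : ℝ) (hα : 0 < α) (hβ : 0 < β) (n : ℕ) :
    Matrix.det (Matrix.of fun i j : Fin (n + 1) =>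
      (-1 : ℝ) ^ n * (n.choose (j : ℕ) : ℝ) *
        poch (α + (n : ℝ) - (i : ℕ)) (n - (j : ℕ)) * poch (β + (i : ℕ)) (j : ℕ) /
        (poch α (n - (j : ℕ)) * poch β (j : ℕ))) ≠ 0 := by
  classical
  set A : Matrix (Fin (n+1)) (Fin (n+1)) ℝ :=
    fun k j => (connP α β n (j : ℕ)).coeff (k : ℕ) with hA
  set V : Matrix (Fin (n+1)) (Fin (n+1)) ℝ :=
    Matrix.vandermonde (fun i : Fin (n+1) => ((i : ℕ) : ℝ)) with hV
  set W : Matrix (Fin (n+1)) (Fin (n+1)) ℝ :=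
    Matrix.vandermonde (fun i : Fin (n+1) => -β - ((i : ℕ) : ℝ)) with hW
  have hdeg : ∀ j : Fin (n+1), (connP α β n (j : ℕ)).natDegree < n + 1 := fun j =>
    Nat.lt_succ_of_le (connP_natDegree_le α β n j (Nat.lt_succ_iff.mp j.isLt))
  -- key evaluation identity
  have hVA : ∀ (x : ℝ) (j : Fin (n+1)),
      ∑ k : Fin (n+1), x ^ (k : ℕ) * A k j = (connP α β n (j : ℕ)).eval x := by
    intro x j
    rw [eval_eq_sum_range' (hdeg j) x]
    rw [Fin.sum_univ_eq_sum_range (fun k : ℕ => x ^ k * (connP α β n (j : ℕ)).coeff k)]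
    exact Finset.sum_congr rfl fun k _ => mul_comm _ _
  -- the core matrix is V * A
  have hM : (Matrix.of fun i j : Fin (n+1) =>
      poch (α + (n : ℝ) - (i : ℕ)) (n - (j : ℕ)) * poch (β + (i : ℕ)) (j : ℕ)) = V * A := by
    ext i j
    rw [Matrix.mul_apply]
    simp only [hV, Matrix.vandermonde, Matrix.of_apply]
    rw [hVA, connP_eval, poch_eq_prod, poch_eq_prod, mul_comm]
    congr 1
    · exact Finset.prod_congr rfl fun k _ => by ring
    · exact Finset.prod_congr rfl fun k _ => by ring
  -- W * A is lower triangular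
  have hWA : ∀ i j : Fin (n+1), (W * A) i j = (connP α β n (j : ℕ)).eval (-β - (i : ℕ)) := by
    intro i j
    rw [Matrix.mul_apply]
    simp only [hW, Matrix.vandermonde, Matrix.of_apply]
    exact hVA _ j
  have htri : (W * A).BlockTriangular OrderDual.toDual := by
    intro i j hij
    have hij' : (i : ℕ) < (j : ℕ) := hij
    rw [hWA, connP_eval]
    have : ∏ k ∈ Finset.range (j : ℕ), (-β - ((i : ℕ) : ℝ) + (β + k)) = 0 := by
      refine Finset.prod_eq_zero (Finset.mem_range.mpr hij') ?_
      ring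
    rw [this, zero_mul]
  have hdiag : ∀ i : Fin (n+1), (W * A) i i ≠ 0 := by
    intro i
    rw [hWA, connP_eval]
    refine mul_ne_zero ?_ ?_
    · rw [Finset.prod_ne_zero_iff]
      intro k hk
      rw [Finset.mem_range] at hk
      have : (-β - ((i : ℕ) : ℝ) + (β + k)) = (k : ℝ) - (i : ℕ) := by ring
      rw [this]
      intro h
      have : (k : ℝ) = (i : ℕ) := by linarith
      exact absurd (Nat.cast_injective this) (Nat.ne_of_lt hk)
    · rw [Finset.prod_ne_zero_iff]
      intro k _
      have : (0:ℝ) < α + n + k - (-β - (i : ℕ)) := by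
        have : (0:ℝ) ≤ (n:ℝ) := Nat.cast_nonneg n
        have : (0:ℝ) ≤ (k:ℝ) := Nat.cast_nonneg k
        have : (0:ℝ) ≤ ((i:ℕ):ℝ) := Nat.cast_nonneg _
        nlinarith [Nat.cast_nonneg (α := ℝ) n, Nat.cast_nonneg (α := ℝ) k]
      linarith
  have hdetWA : (W * A).det ≠ 0 := by
    rw [Matrix.det_of_lowerTriangular _ htri]
    exact Finset.prod_ne_zero_iff.mpr fun i _ => hdiag i
  have hdetA : A.det ≠ 0 := by
    rw [Matrix.det_mul] at hdetWA
    exact fun h => hdetWA (by rw [h, mul_zero])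
  have hdetV : V.det ≠ 0 := by
    rw [hV, Matrix.det_vandermonde_ne_zero_iff]
    intro a b hab
    exact Fin.val_injective (Nat.cast_injective hab)
  -- column scaling
  have hscale : (Matrix.of fun i j : Fin (n + 1) =>
      (-1 : ℝ) ^ n * (n.choose (j : ℕ) : ℝ) *
        poch (α + (n : ℝ) - (i : ℕ)) (n - (j : ℕ)) * poch (β + (i : ℕ)) (j : ℕ) /
        (poch α (n - (j : ℕ)) * poch β (j : ℕ))) =
      Matrix.of (fun i j : Fin (n+1) =>
        ((-1 : ℝ) ^ n * (n.choose (j : ℕ) : ℝ) / (poch α (n - (j : ℕ)) * poch β (j : ℕ))) *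
        (Matrix.of fun i j : Fin (n+1) =>
          poch (α + (n : ℝ) - (i : ℕ)) (n - (j : ℕ)) * poch (β + (i : ℕ)) (j : ℕ)) i j) := by
    ext i j
    simp only [Matrix.of_apply]
    ring
  rw [hscale, Matrix.det_mul_row, hM, Matrix.det_mul]
  refine mul_ne_zero (Finset.prod_ne_zero_iff.mpr fun j _ => ?_) (mul_ne_zero hdetV hdetA)
  have hc : (0:ℝ) < (n.choose (j : ℕ) : ℝ) := by
    exact_mod_cast Nat.choose_pos (Nat.lt_succ_iff.mp j.isLt)
  have hd : (0:ℝ) < poch α (n - (j : ℕ)) * poch β (j : ℕ) :=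
    mul_pos (poch_pos hα _) (poch_pos hβ _)
  exact div_ne_zero (mul_ne_zero (pow_ne_zero _ (by norm_num)) hc.ne') hd.ne'
end
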